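/- arXiv:1908.03268 — 2 statements merged into one kernel-verified Lean document; each statement's English description precedes it below -/
import Mathlib

section
/- Let G be a quasi-Polish groupoid and H ⊆ G a subgroupoid (a subset closed under inverse and multiplication) which is quasi-Polish in the subspace topology and τ-fiberwise dense, i.e. H ∩ τ⁻¹(x) is dense in τ⁻¹(x) for every x ∈ G⁰. Then H = G. -/
open Set Topology

attribute [local instance] Classical.propDecidable

/-- A small groupoid, presented on its space of morphisms `G`, with objects
identified with unit morphisms.  `comp g h` is only meaningful when
`src g = tgt h`; its values elsewhere are irrelevant junk. -/
structure Groupoidal (G : Type*) where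
  src : G → G
  tgt : G → G
  comp : G → G → G
  inv : G → G
  src_src : ∀ g, src (src g) = src g
  tgt_of_src : ∀ g, tgt (src g) = src g
  src_of_tgt : ∀ g, src (tgt g) = tgt g
  tgt_tgt : ∀ g, tgt (tgt g) = tgt g
  comp_src : ∀ g, comp g (src g) = g
  tgt_comp_self : ∀ g, comp (tgt g) g = g
  src_comp : ∀ g h, src g = tgt h → src (comp g h) = src h
  tgt_comp : ∀ g h, src g = tgt h → tgt (comp g h) = tgt g
  comp_assoc : ∀ g h k, src g = tgt h → src h = tgt k →
    comp (comp g h) k = comp g (comp h k)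
  src_inv : ∀ g, src (inv g) = tgt g
  tgt_inv : ∀ g, tgt (inv g) = src g
  comp_inv_self : ∀ g, comp g (inv g) = tgt g
  inv_comp_self : ∀ g, comp (inv g) g = src g

namespace Groupoidal

variable {G : Type*} (S : Groupoidal G)

/-- The set of objects (= unit morphisms) of the groupoid. -/
def units : Set G := {x | S.src x = x}

/-- Two morphisms are composable when the source of the first matches the
target of the second. -/
def Composable (g h : G) : Prop := S.src g = S.tgt h

/-- Pointwise product of two subsets of a groupoid. -/
def setMul (A B : Set G) : Set G :=
  {k | ∃ g ∈ A, ∃ h ∈ B, S.Composable g h ∧ k = S.comp g h}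

/-- Pointwise inverse of a subset of a groupoid. -/
def setInv (A : Set G) : Set G := S.inv '' A

def IsSymmetric (A : Set G) : Prop := S.setInv A = A

def IsUnital (A : Set G) : Prop := S.src '' A ⊆ A ∧ S.tgt '' A ⊆ A

/-- A subgroupoid: a subset closed under inverse and multiplication. -/
def IsSubgroupoid (A : Set G) : Prop := S.IsSymmetric A ∧ S.setMul A A ⊆ A

/-- A topological groupoid: all structure maps are continuous (multiplication
on the subspace of composable pairs). -/
structure IsTopological [TopologicalSpace G] : Prop where
  continuous_src : Continuous S.src
  continuous_tgt : Continuous S.tgt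
  continuous_inv : Continuous S.inv
  continuous_comp :
    Continuous fun p : {p : G × G // S.Composable p.1 p.2} => S.comp p.1.1 p.1.2

/-- An open topological groupoid: the source map is open. -/
def IsOpenGroupoid [TopologicalSpace G] : Prop := IsOpenMap S.src

/-- A non-Archimedean topological groupoid: every unit morphism has a
neighborhood basis of open subgroupoids. -/
def IsNonArchimedean [TopologicalSpace G] : Prop :=
  ∀ x ∈ S.units, ∀ W ∈ nhds x, ∃ U : Set G,
    IsOpen U ∧ x ∈ U ∧ U ⊆ W ∧ S.IsSubgroupoid U

/-- A standard Borel groupoid structure: all structure maps are Borel. -/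
structure IsBorelGroupoid [MeasurableSpace G] : Prop where
  measurable_src : Measurable S.src
  measurable_tgt : Measurable S.tgt
  measurable_inv : Measurable S.inv
  measurable_comp :
    Measurable fun p : {p : G × G // S.Composable p.1 p.2} => S.comp p.1.1 p.1.2

end Groupoidal

/-- A `Π⁰₂` subset of a topological space: a countable intersection of sets
of the form (closed ∪ open). -/
def IsPi02 {X : Type*} [TopologicalSpace X] (A : Set X) : Prop :=
  ∃ C O : ℕ → Set X, (∀ n, IsClosed (C n)) ∧ (∀ n, IsOpen (O n)) ∧
    A = ⋂ n, C n ∪ O n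

/-- A quasi-Polish space: homeomorphic to a `Π⁰₂` subspace of `𝕊^ℕ`, where
`𝕊 = Prop` is the Sierpiński space. -/
def IsQuasiPolish (X : Type*) [TopologicalSpace X] : Prop :=
  ∃ A : Set (ℕ → Prop), IsPi02 A ∧ Nonempty (X ≃ₜ ↥A)

/-- A σ-locally Polish space: a countable cover by open Polish subspaces. -/
def IsSigmaLocallyPolish (X : Type*) [TopologicalSpace X] : Prop :=
  ∃ V : ℕ → Set X, (∀ n, IsOpen (V n)) ∧ (∀ n, PolishSpace (V n)) ∧
    (⋃ n, V n) = Set.univ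

/-- A functor between groupoids presented on their spaces of morphisms. -/
structure GFunctor {G H : Type*} (S : Groupoidal G) (T : Groupoidal H) where
  toFun : G → H
  map_src : ∀ g, toFun (S.src g) = T.src (toFun g)
  map_tgt : ∀ g, toFun (S.tgt g) = T.tgt (toFun g)
  map_comp : ∀ g h, S.Composable g h →
    toFun (S.comp g h) = T.comp (toFun g) (toFun h)

namespace GFunctor

variable {G H K : Type*} {S : Groupoidal G} {T : Groupoidal H} {R : Groupoidal K}

/-- The identity functor. -/
def id (S : Groupoidal G) : GFunctor S S :=
  ⟨fun g => g, fun _ => rfl, fun _ => rfl, fun _ _ _ => rfl⟩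

/-- Composition of functors. -/
def comp (F₂ : GFunctor T R) (F₁ : GFunctor S T) : GFunctor S R where
  toFun := F₂.toFun ∘ F₁.toFun
  map_src g := by simp only [Function.comp_apply, F₁.map_src, F₂.map_src]
  map_tgt g := by simp only [Function.comp_apply, F₁.map_tgt, F₂.map_tgt]
  map_comp g h hc := by
    have hc' : T.Composable (F₁.toFun g) (F₁.toFun h) := by
      unfold Groupoidal.Composable at hc ⊢
      rw [← F₁.map_src, ← F₁.map_tgt, hc]
    simp only [Function.comp_apply, F₁.map_comp g h hc, F₂.map_comp _ _ hc']

/-- A functor is full if it is surjective on each hom-set. -/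
def Full (F : GFunctor S T) : Prop :=
  ∀ x ∈ S.units, ∀ y ∈ S.units, ∀ k : H,
    T.src k = F.toFun x → T.tgt k = F.toFun y →
      ∃ g : G, S.src g = x ∧ S.tgt g = y ∧ F.toFun g = k

/-- A functor is faithful if it is injective on each hom-set. -/
def Faithful (F : GFunctor S T) : Prop :=
  ∀ g g' : G, S.src g = S.src g' → S.tgt g = S.tgt g' →
    F.toFun g = F.toFun g' → g = g'

end GFunctor

/-- A natural transformation (automatically an isomorphism, between functors
of groupoids); `app` is only meaningful on unit morphisms. -/
structure GNatIso {G H : Type*} {S : Groupoidal G} {T : Groupoidal H}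
    (F F' : GFunctor S T) where
  app : G → H
  app_src : ∀ x ∈ S.units, T.src (app x) = F.toFun x
  app_tgt : ∀ x ∈ S.units, T.tgt (app x) = F'.toFun x
  naturality : ∀ g : G,
    T.comp (app (S.tgt g)) (F.toFun g) = T.comp (F'.toFun g) (app (S.src g))

/-- A Borel functor which is an equivalence of groupoids witnessed by a Borel
inverse functor and Borel natural isomorphisms. -/
def IsBorelEquivalence {G H : Type*} [MeasurableSpace G] [MeasurableSpace H]
    {S : Groupoidal G} {T : Groupoidal H} (F : GFunctor S T) : Prop :=
  Measurable F.toFun ∧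
  ∃ F' : GFunctor T S, Measurable F'.toFun ∧
    (∃ α : GNatIso (F.comp F') (GFunctor.id T), Measurable α.app) ∧
    (∃ β : GNatIso (F'.comp F) (GFunctor.id S), Measurable β.app)

/-!
Left translation by `g` is a homeomorphism from the `τ`-fiber over `σ g` onto the `τ`-fiber
over `τ g`, so `H` and `g H` are both dense in the latter. A quasi-Polish subspace of a
quasi-Polish space is `Π⁰₂`, so both are dense `Π⁰₂`, hence comeagre, subsets of that fiber; the
fiber is itself `Π⁰₂`, hence quasi-Polish, hence Baire. So some `k = g h` has `h, k ∈ H`, and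
`g = k h⁻¹ ∈ H`.

Baireness of a `Π⁰₂` subspace `⋂ₙ (Cₙ ∪ Oₙ)` of `𝕊^ℕ` is proved directly. Open sets of `𝕊^ℕ` are
upward closed and determined by finite approximations, so one builds points `aₖ` with increasing
finite approximations `tₖ ≤ aₖ` which force membership in the `k`-th dense open set and in every
`Oₙ` (`n ≤ k`) containing `aₖ`. The union `x` of the `tₖ` is the limit of the `aₖ`; it lies in
`Oₙ` if some `aₖ` (`k ≥ n`) does, and otherwise in the closed set `Cₙ`, which contains all
these `aₖ`.
-/

open Filter TopologicalSpace

section Pi02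

variable {X Y : Type*} [TopologicalSpace X] [TopologicalSpace Y]

lemma isPi02_iInter_union {ι : Type*} [Countable ι] {C O : ι → Set X}
    (hC : ∀ i, IsClosed (C i)) (hO : ∀ i, IsOpen (O i)) : IsPi02 (⋂ i, C i ∪ O i) := by
  obtain ⟨f, hf⟩ := exists_surjective_nat (Option ι)
  refine ⟨fun n => (f n).elim univ C, fun n => (f n).elim ∅ O, fun n => ?_, fun n => ?_, ?_⟩
  · cases h : f n <;> simp [h, hC]
  · cases h : f n <;> simp [h, hO]
  · ext x
    simp only [mem_iInter, mem_union]
    rw [← hf.forall (p := fun o : Option ι => x ∈ o.elim univ C ∨ x ∈ o.elim ∅ O), Option.forall]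
    simp

lemma IsClosed.isPi02_union {C O : Set X} (hC : IsClosed C) (hO : IsOpen O) :
    IsPi02 (C ∪ O) := by
  simpa only [iInter_const] using isPi02_iInter_union (ι := Unit) (fun _ => hC) (fun _ => hO)

lemma IsPi02.iInter {ι : Type*} [Countable ι] {A : ι → Set X} (hA : ∀ i, IsPi02 (A i)) :
    IsPi02 (⋂ i, A i) := by
  choose C O hC hO hCO using hA
  have : ⋂ i, A i = ⋂ p : ι × ℕ, C p.1 p.2 ∪ O p.1 p.2 := by
    ext x
    simp [hCO, Prod.forall]
  rw [this]
  exact isPi02_iInter_union (fun p => hC p.1 p.2) (fun p => hO p.1 p.2)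

lemma IsPi02.inter {A B : Set X} (hA : IsPi02 A) (hB : IsPi02 B) : IsPi02 (A ∩ B) := by
  rw [inter_eq_iInter]
  exact IsPi02.iInter (Bool.forall_bool.2 ⟨hB, hA⟩)

lemma IsPi02.preimage {A : Set Y} (hA : IsPi02 A) {f : X → Y} (hf : Continuous f) :
    IsPi02 (f ⁻¹' A) := by
  obtain ⟨C, O, hC, hO, rfl⟩ := hA
  simpa only [preimage_iInter, preimage_union] using
    isPi02_iInter_union (fun n => (hC n).preimage hf) (fun n => (hO n).preimage hf)

lemma IsPi02.image_of_isEmbedding {P : Set X} (hP : IsPi02 P) {f : X → Y} (hf : IsEmbedding f)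
    (hrange : IsPi02 (range f)) : IsPi02 (f '' P) := by
  obtain ⟨C, O, hC, hO, rfl⟩ := hP
  choose C' hC' hCf using fun n => hf.isInducing.isClosed_iff.1 (hC n)
  choose O' hO' hOf using fun n => hf.isInducing.isOpen_iff.1 (hO n)
  simp_rw [← hCf, ← hOf, ← preimage_union, ← preimage_iInter, image_preimage_eq_range_inter]
  exact hrange.inter (isPi02_iInter_union hC' hO')

lemma isPi02_setOf_eq [T0Space X] [SecondCountableTopology X] {f g : Y → X}
    (hf : Continuous f) (hg : Continuous g) : IsPi02 {y | f y = g y} := by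
  have : {y | f y = g y} =
      ⋂ u : countableBasis X, ((f ⁻¹' u)ᶜ ∪ g ⁻¹' u) ∩ ((g ⁻¹' u)ᶜ ∪ f ⁻¹' u) := by
    ext y
    simp only [mem_ofPred_eq, ← inseparable_iff_eq, (isBasis_countableBasis X).inseparable_iff,
      mem_iInter, mem_inter_iff, mem_union, mem_compl_iff, mem_preimage, Subtype.forall]
    exact forall₂_congr fun u _ => by tauto
  rw [this]
  have := (countable_countableBasis X).to_subtype
  refine IsPi02.iInter fun u => ?_
  have hu := isOpen_of_mem_countableBasis u.2
  exact ((hu.preimage hf).isClosed_compl.isPi02_union (hu.preimage hg)).inter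
    ((hu.preimage hg).isClosed_compl.isPi02_union (hu.preimage hf))

lemma Dense.interior_union_of_isClosed {C O : Set X} (hd : Dense (C ∪ O)) (hC : IsClosed C) :
    Dense (interior C ∪ O) := by
  have hCO : (closure O)ᶜ ⊆ interior C := by
    refine interior_maximal (fun z hz => ?_) isClosed_closure.isOpen_compl
    have := hd.closure_eq ▸ mem_univ z
    rw [closure_union, hC.closure_eq] at this
    exact this.resolve_right hz
  refine dense_iff_closure_eq.2 (eq_univ_of_forall fun z => ?_)
  rw [closure_union]
  by_cases hz : z ∈ closure O
  · exact Or.inr hz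
  · exact Or.inl (subset_closure (hCO hz))

lemma IsPi02.mem_residual {P : Set X} (hP : IsPi02 P) (hd : Dense P) : P ∈ residual X := by
  obtain ⟨C, O, hC, hO, rfl⟩ := hP
  refine countable_iInter_mem.2 fun n => ?_
  have hdn : Dense (C n ∪ O n) := hd.mono (iInter_subset _ n)
  exact Filter.mem_of_superset (residual_of_dense_open (isOpen_interior.union (hO n))
    (hdn.interior_union_of_isClosed (hC n))) (union_subset_union_left _ interior_subset)

lemma IsPi02.inter_nonempty_of_dense [BaireSpace X] [Nonempty X] {P Q : Set X}
    (hP : IsPi02 P) (hPd : Dense P) (hQ : IsPi02 Q) (hQd : Dense Q) : (P ∩ Q).Nonempty :=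
  (dense_of_mem_residual (Filter.inter_mem (hP.mem_residual hPd) (hQ.mem_residual hQd))).nonempty

end Pi02

section Sierpinski

lemma Prop.specializes_iff {p q : Prop} : p ⤳ q ↔ (q → p) := by
  by_cases hp : p <;> by_cases hq : q <;> simp [hp, hq, specializes_iff_pure]

variable {ι : Type*}

lemma IsOpen.mem_of_le {W : Set (ι → Prop)} (hW : IsOpen W) {a b : ι → Prop} (ha : a ∈ W)
    (hab : a ≤ b) : b ∈ W :=
  (specializes_pi.2 fun i => Prop.specializes_iff.2 (hab i)).mem_open hW ha

lemma exists_finset_le_mem_of_isOpen {W : Set (ι → Prop)} (hW : IsOpen W) {a : ι → Prop}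
    (ha : a ∈ W) : ∃ s : Finset ι, (· ∈ s) ≤ a ∧ (· ∈ s) ∈ W := by
  obtain ⟨I, u, hu, hIu⟩ := isOpen_pi_iff.1 hW a ha
  refine ⟨I.filter a, fun i hi => (Finset.mem_filter.1 hi).2, hIu fun i hi => ?_⟩
  have : (i ∈ I.filter a) = a i := propext (by simp [Finset.mem_coe.1 hi])
  simpa only [this] using (hu i hi).2

lemma isOpen_setOf_finset_le (s : Finset ι) : IsOpen {b : ι → Prop | (· ∈ s) ≤ b} := by
  have : {b : ι → Prop | (· ∈ s) ≤ b} = ⋂ i ∈ s, {b | b i} := by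
    ext b
    simp [Pi.le_def]
  rw [this]
  exact isOpen_biInter_finset fun i _ => continuous_Prop.1 (continuous_apply i)

end Sierpinski

section SierpinskiBaire

variable {A : Set (ℕ → Prop)} {C O : ℕ → Set (ℕ → Prop)}

lemma exists_finset_refinement (hO : ∀ n, IsOpen (O n)) {D : Set (ℕ → Prop)} (hD : IsOpen D)
    (hAD : ∀ W, IsOpen W → (W ∩ A).Nonempty → (W ∩ A ∩ D).Nonempty) (k : ℕ)
    {a : ℕ → Prop} (ha : a ∈ A) {s : Finset ℕ} (hsa : (· ∈ s) ≤ a) :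
    ∃ a' ∈ A, ∃ t : Finset ℕ, (· ∈ t) ≤ a' ∧ s ⊆ t ∧ (· ∈ t) ∈ D ∧
      ∀ n ≤ k, a' ∈ O n → (· ∈ t) ∈ O n := by
  obtain ⟨a', ⟨has', ha'A⟩, ha'D⟩ := hAD _ (isOpen_setOf_finset_le s) ⟨a, hsa, ha⟩
  let N := (Finset.range (k + 1)).filter (a' ∈ O ·)
  have hU : IsOpen ({b | (· ∈ s) ≤ b} ∩ D ∩ ⋂ n ∈ N, O n) :=
    ((isOpen_setOf_finset_le s).inter hD).inter (isOpen_biInter_finset fun n _ => hO n)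
  obtain ⟨t, hta', ⟨hst, htD⟩, htO⟩ := exists_finset_le_mem_of_isOpen hU
    ⟨⟨has', ha'D⟩, mem_iInter₂.2 fun n hn => (Finset.mem_filter.1 hn).2⟩
  refine ⟨a', ha'A, t, hta', fun i hi => hst i hi, htD, fun n hn ha'n => ?_⟩
  exact mem_iInter₂.1 htO n (Finset.mem_filter.2 ⟨Finset.mem_range.2 (by omega), ha'n⟩)

lemma exists_mem_inter_iInter (hA : A = ⋂ n, C n ∪ O n) (hC : ∀ n, IsClosed (C n))
    (hO : ∀ n, IsOpen (O n)) {D : ℕ → Set (ℕ → Prop)} (hD : ∀ k, IsOpen (D k))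
    (hAD : ∀ k W, IsOpen W → (W ∩ A).Nonempty → (W ∩ A ∩ D k).Nonempty)
    {V : Set (ℕ → Prop)} (hV : IsOpen V) (hVA : (V ∩ A).Nonempty) :
    ∃ x ∈ V, x ∈ A ∧ ∀ k, x ∈ D k := by
  obtain ⟨a₀, ha₀V, ha₀A⟩ := hVA
  obtain ⟨s₀, hs₀a₀, hs₀V⟩ := exists_finset_le_mem_of_isOpen hV ha₀V
  let State := {p : (ℕ → Prop) × Finset ℕ // p.1 ∈ A ∧ (· ∈ p.2) ≤ p.1}
  have step : ∀ k (p : State), ∃ q : State, p.1.2 ⊆ q.1.2 ∧ (· ∈ q.1.2) ∈ D k ∧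
      ∀ n ≤ k, q.1.1 ∈ O n → (· ∈ q.1.2) ∈ O n := fun k p => by
    obtain ⟨a, ha, t, hta, hst, htD, htO⟩ :=
      exists_finset_refinement hO (hD k) (hAD k) k p.2.1 p.2.2
    exact ⟨⟨(a, t), ha, hta⟩, hst, htD, htO⟩
  choose next hnext_sub hnext_D hnext_O using step
  let seq : ℕ → State := fun k => Nat.rec ⟨(a₀, s₀), ha₀A, hs₀a₀⟩ next k
  let a : ℕ → ℕ → Prop := fun k => (seq k).1.1
  let t : ℕ → Finset ℕ := fun k => (seq k).1.2
  have ht : Monotone t := monotone_nat_of_le_succ fun k => hnext_sub k (seq k)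
  let x : ℕ → Prop := fun i => ∃ k, i ∈ t k
  have htx : ∀ k, (· ∈ t k) ≤ x := fun k i hi => ⟨k, hi⟩
  have hax : Tendsto a atTop (𝓝 x) := tendsto_pi_nhds.2 fun i => tendsto_nhds_Prop.2
    fun ⟨k, hk⟩ => eventually_atTop.2 ⟨k, fun m hm => (seq m).2.2 i (ht hm hk)⟩
  refine ⟨x, hV.mem_of_le hs₀V (htx 0), ?_,
    fun k => (hD k).mem_of_le (hnext_D k (seq k)) (htx (k + 1))⟩
  rw [hA]
  refine mem_iInter.2 fun n => ?_
  by_cases h : ∃ k ≥ n, a (k + 1) ∈ O n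
  · obtain ⟨k, hk, hakO⟩ := h
    exact Or.inr ((hO n).mem_of_le (hnext_O k (seq k) n hk hakO) (htx (k + 1)))
  · push Not at h
    refine Or.inl ((hC n).mem_of_tendsto (hax.comp (tendsto_add_atTop_nat 1))
      (eventually_atTop.2 ⟨n, fun k hk => ?_⟩))
    have hakA : a (k + 1) ∈ ⋂ n, C n ∪ O n := hA ▸ (seq (k + 1)).2.1
    exact (mem_iInter.1 hakA n).resolve_right (h k hk)

theorem IsPi02.baireSpace (hA : IsPi02 A) : BaireSpace A := by
  obtain ⟨C, O, hC, hO, hAeq⟩ := hA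
  refine ⟨fun f hfo hfd => dense_iff_inter_open.2 fun U hU hUA => ?_⟩
  choose D hD hDf using fun n => isOpen_induced_iff.1 (hfo n)
  obtain ⟨V, hV, rfl⟩ := isOpen_induced_iff.1 hU
  have hAD : ∀ k W, IsOpen W → (W ∩ A).Nonempty → (W ∩ A ∩ D k).Nonempty := by
    rintro k W hW ⟨b, hbW, hbA⟩
    obtain ⟨⟨c, hcA⟩, hcW, hcf⟩ :=
      (hfd k).inter_open_nonempty _ (hW.preimage continuous_subtype_val) ⟨⟨b, hbA⟩, hbW⟩
    exact ⟨c, ⟨hcW, hcA⟩, (Set.ext_iff.1 (hDf k) _).2 hcf⟩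
  obtain ⟨⟨b, hbA⟩, hbV⟩ := hUA
  obtain ⟨x, hxV, hxA, hxD⟩ := exists_mem_inter_iInter hAeq hC hO hD hAD hV ⟨b, hbV, hbA⟩
  exact ⟨⟨x, hxA⟩, hxV, mem_iInter.2 fun k => (Set.ext_iff.1 (hDf k) _).1 (hxD k)⟩

end SierpinskiBaire

namespace IsQuasiPolish

variable {X : Type*} [TopologicalSpace X]

lemma secondCountableTopology (h : IsQuasiPolish X) : SecondCountableTopology X :=
  let ⟨_, _, ⟨e⟩⟩ := h
  e.secondCountableTopology

lemma t0Space (h : IsQuasiPolish X) : T0Space X :=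
  let ⟨_, _, ⟨e⟩⟩ := h
  e.isEmbedding.t0Space

lemma baireSpace (h : IsQuasiPolish X) : BaireSpace X :=
  let ⟨_, hA, ⟨e⟩⟩ := h
  have := hA.baireSpace
  e.symm.baireSpace

lemma of_isPi02 (h : IsQuasiPolish X) {B : Set X} (hB : IsPi02 B) : IsQuasiPolish B := by
  obtain ⟨A, hA, ⟨e⟩⟩ := h
  have hf : IsEmbedding (Subtype.val ∘ e) := IsEmbedding.subtypeVal.comp e.isEmbedding
  have hrange : range (Subtype.val ∘ e) = A := by
    rw [range_comp, e.range_coe, image_univ, Subtype.range_coe]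
  have hBrange : range (Subtype.val ∘ e ∘ (Subtype.val : B → X)) = (Subtype.val ∘ e) '' B := by
    rw [← Function.comp_assoc, range_comp, Subtype.range_coe]
  exact ⟨_, hB.image_of_isEmbedding hf (by rwa [hrange]),
    ⟨(hf.comp IsEmbedding.subtypeVal).toHomeomorph.trans (Homeomorph.setCongr hBrange)⟩⟩

lemma isPi02 [T0Space X] [SecondCountableTopology X] {H : Set X} (hH : IsQuasiPolish H) :
    IsPi02 H := by
  obtain ⟨A, hA, ⟨e⟩⟩ := hH
  -- extend the coordinates of `e` to open subsets `V n` of `X`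
  have hcoord : ∀ n, IsOpen {h : H | (e h : ℕ → Prop) n} := fun n =>
    continuous_Prop.1 ((continuous_apply n).comp (continuous_subtype_val.comp e.continuous))
  choose V hV hVH using fun n => isOpen_induced_iff.1 (hcoord n)
  let F : X → ℕ → Prop := fun z n => z ∈ V n
  have hF : Continuous F := continuous_pi fun n => continuous_Prop.2 (hV n)
  have hFe : ∀ h : H, F h = e h := fun h => funext fun n => propext (Set.ext_iff.1 (hVH n) h)
  -- `H` is the fixed-point set of the retraction `r` of `F ⁻¹' A` onto `H`
  let r : F ⁻¹' A → X := fun b => e.symm ⟨F b, b.2⟩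
  have hr : Continuous r := continuous_subtype_val.comp
    (e.symm.continuous.comp ((hF.comp continuous_subtype_val).subtype_mk _))
  have hHr : H = Subtype.val '' {b | r b = b} := by
    ext z
    constructor
    · intro hz
      have hzA : F z ∈ A := hFe ⟨z, hz⟩ ▸ (e ⟨z, hz⟩).2
      refine ⟨⟨z, hzA⟩, ?_, rfl⟩
      change (e.symm ⟨F z, hzA⟩ : X) = z
      rw [show (⟨F z, hzA⟩ : A) = e ⟨z, hz⟩ from Subtype.ext (hFe ⟨z, hz⟩), e.symm_apply_apply]
    · rintro ⟨b, hb, rfl⟩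
      exact hb ▸ (e.symm _).2
  rw [hHr]
  exact (isPi02_setOf_eq hr continuous_subtype_val).image_of_isEmbedding IsEmbedding.subtypeVal
    (Subtype.range_coe ▸ hA.preimage hF)

end IsQuasiPolish

namespace Groupoidal

variable {G : Type*} {S : Groupoidal G}

lemma inv_comp_cancel_left {g h : G} (hgh : S.src g = S.tgt h) :
    S.comp (S.inv g) (S.comp g h) = h := by
  rw [← S.comp_assoc _ _ _ (S.src_inv g) hgh, S.inv_comp_self, hgh, S.tgt_comp_self]

lemma comp_inv_cancel_left {g k : G} (hgk : S.tgt k = S.tgt g) :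
    S.comp g (S.comp (S.inv g) k) = k := by
  rw [← S.comp_assoc _ _ _ (S.tgt_inv g).symm (by rw [S.src_inv, hgk]), S.comp_inv_self, ← hgk,
    S.tgt_comp_self]

lemma comp_inv_cancel_right {g h : G} (hgh : S.src g = S.tgt h) :
    S.comp (S.comp g h) (S.inv h) = g := by
  rw [S.comp_assoc _ _ _ hgh (S.tgt_inv h).symm, S.comp_inv_self, ← hgh, S.comp_src]

lemma IsSubgroupoid.mem_of_comp_mem {H : Set G} (hH : S.IsSubgroupoid H) {g h : G}
    (hh : h ∈ H) (hgh : S.src g = S.tgt h) (hgh_mem : S.comp g h ∈ H) : g ∈ H := by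
  have hinv : S.inv h ∈ H := hH.1 ▸ mem_image_of_mem S.inv hh
  have hcomposable : S.Composable (S.comp g h) (S.inv h) := by
    rw [Composable, S.src_comp _ _ hgh, S.tgt_inv]
  exact comp_inv_cancel_right hgh ▸ hH.2 ⟨_, hgh_mem, _, hinv, hcomposable, rfl⟩

def IsTopological.leftTranslation [TopologicalSpace G] (hS : S.IsTopological) (g : G) :
    S.tgt ⁻¹' {S.src g} ≃ₜ S.tgt ⁻¹' {S.tgt g} where
  toFun h := ⟨S.comp g h, S.tgt_comp g h h.2.symm⟩
  invFun k := ⟨S.comp (S.inv g) k, (S.tgt_comp _ _ ((S.src_inv g).trans k.2.symm)).trans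
    (S.tgt_inv g)⟩
  left_inv h := Subtype.ext (inv_comp_cancel_left h.2.symm)
  right_inv k := Subtype.ext (comp_inv_cancel_left k.2)
  continuous_toFun := (hS.continuous_comp.comp ((continuous_const.prodMk
    continuous_subtype_val).subtype_mk fun h => h.2.symm)).subtype_mk _
  continuous_invFun := (hS.continuous_comp.comp ((continuous_const.prodMk
    continuous_subtype_val).subtype_mk fun k => (S.src_inv g).trans k.2.symm)).subtype_mk _

lemma IsTopological.leftTranslation_apply [TopologicalSpace G] (hS : S.IsTopological) (g : G)
    (h : S.tgt ⁻¹' {S.src g}) : (hS.leftTranslation g h : G) = S.comp g h :=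
  rfl

end Groupoidal

/-- A τ-fiberwise dense quasi-Polish subgroupoid of a quasi-Polish groupoid is
the whole groupoid. -/
theorem dense_subgroupoid_eq_self {G : Type*} [TopologicalSpace G]
    (S : Groupoidal G) (hTop : S.IsTopological) (hQP : IsQuasiPolish G)
    (H : Set G) (hSub : S.IsSubgroupoid H) (hHQP : IsQuasiPolish ↥H)
    (hDense : ∀ x ∈ S.units,
      Dense ((Subtype.val : ↥(S.tgt ⁻¹' {x}) → G) ⁻¹' H)) :
    H = Set.univ := by
  have := hQP.t0Space
  have := hQP.secondCountableTopology
  have hH : IsPi02 H := hHQP.isPi02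
  refine eq_univ_of_forall fun g => ?_
  let φ := hTop.leftTranslation g
  have hfiber : IsPi02 (S.tgt ⁻¹' {S.tgt g}) := isPi02_setOf_eq hTop.continuous_tgt continuous_const
  have := (hQP.of_isPi02 hfiber).baireSpace
  have : Nonempty (S.tgt ⁻¹' {S.tgt g}) := ⟨⟨g, rfl⟩⟩
  obtain ⟨k, hkH, hk⟩ := IsPi02.inter_nonempty_of_dense
    (hH.preimage continuous_subtype_val) (hDense _ (S.src_of_tgt g))
    ((hH.preimage continuous_subtype_val).preimage φ.symm.continuous)
    ((hDense _ (S.src_src g)).preimage φ.symm.isOpenMap)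
  refine hSub.mem_of_comp_mem hk (φ.symm k).2.symm ?_
  rwa [← hTop.leftTranslation_apply, φ.apply_symm_apply]
end

section
/- (Ramsay's lemma) Let G be a topological groupoid. For any open U ⊆ G and any unital open subset V ⊆ G which is Hausdorff and paracompact in the subspace topology and satisfies G⁰ ∩ V ⊆ U, there is a symmetric unital open W ⊆ U with W·W ⊆ U and G⁰ ∩ W = G⁰ ∩ V. -/
open Set Topology

attribute [local instance] Classical.propDecidable

/-! Around each unit `x` of `V`, continuity of multiplication at `(x, x)` gives an open symmetric
`Q_x ⊆ U` with `Q_x · Q_x ⊆ U`. The units form a closed subset of the Hausdorff space `V`, so `V` is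
covered by the sets `Q_x` together with its non-units, and paracompactness refines this cover to a
locally finite closed cover `(C_i)`. Then `W` consists of the arrows `g` with both ends in `V` such
that `g ∈ Q_i` whenever `σ g` or `τ g` lies in `C_i`: composable `g, h ∈ W` share an end lying in
some `C_i`, so both lie in `Q_i` and `g · h ∈ U`, while local finiteness and closedness of the
`C_i` make `W` open. -/

open Filter

theorem exists_locallyFinite_isClosed_refinement {X ι : Type*} [TopologicalSpace X]
    [ParacompactSpace X] [T2Space X] {u : ι → Set X} (hu : ∀ i, IsOpen (u i))
    (hcover : ⋃ i, u i = univ) :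
    ∃ C : ι → Set X, (∀ i, IsClosed (C i)) ∧ (∀ i, C i ⊆ u i) ∧ ⋃ i, C i = univ ∧
      LocallyFinite C := by
  obtain ⟨v, hvo, hvc, hvf, hvu⟩ := precise_refinement u hu hcover
  obtain ⟨w, hwc, -, hwv⟩ := exists_iUnion_eq_closure_subset hvo hvf.point_finite hvc
  refine ⟨fun i => closure (w i), fun i => isClosed_closure, fun i => (hwv i).trans (hvu i),
    ?_, hvf.subset hwv⟩
  exact univ_subset_iff.1 (hwc ▸ iUnion_mono fun i => subset_closure)

section SubtypeFamily

variable {X ι : Type*} [TopologicalSpace X] {V : Set X} {C : ι → Set V}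

theorem LocallyFinite.finite_setOf_mem_image_val (hC : LocallyFinite C) (y : V) :
    {i | (y : X) ∈ ((↑) '' C i : Set X)}.Finite := by
  simpa only [Subtype.val_injective.mem_set_image] using hC.point_finite y

theorem LocallyFinite.eventually_subset_image_val (hC : LocallyFinite C)
    (hCc : ∀ i, IsClosed (C i)) (hV : IsOpen V) (y : V) :
    ∀ᶠ z in 𝓝 (y : X), {i | z ∈ ((↑) '' C i : Set X)} ⊆ {i | (y : X) ∈ ((↑) '' C i : Set X)} := by
  rw [← map_nhds_subtype_coe_eq_nhds y.2 (hV.mem_nhds y.2), eventually_map]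
  simpa only [Subtype.val_injective.mem_set_image] using hC.eventually_subset hCc y

end SubtypeFamily

namespace Groupoidal

variable {G : Type*} (S : Groupoidal G)

theorem tgt_eq_self_of_mem_units {x : G} (hx : x ∈ S.units) : S.tgt x = x := by
  rw [← hx, S.tgt_of_src]

theorem comp_self_of_mem_units {x : G} (hx : x ∈ S.units) : S.comp x x = x := by
  nth_rw 2 [← show S.src x = x from hx]
  exact S.comp_src x

theorem inv_inv (g : G) : S.inv (S.inv g) = g := by
  calc S.inv (S.inv g)
      = S.comp (S.inv (S.inv g)) (S.comp (S.inv g) g) := by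
        rw [S.inv_comp_self, ← S.tgt_inv g, ← S.src_inv (S.inv g), S.comp_src]
    _ = S.comp (S.comp (S.inv (S.inv g)) (S.inv g)) g :=
        (S.comp_assoc _ _ _ (S.src_inv _) (S.src_inv g)).symm
    _ = g := by rw [S.inv_comp_self, S.src_inv, S.tgt_comp_self]

theorem inv_eq_self_of_mem_units {x : G} (hx : x ∈ S.units) : S.inv x = x := by
  have hunit : S.tgt (S.inv x) = x := by rw [S.tgt_inv, hx]
  rw [← S.tgt_comp_self (S.inv x), hunit, S.comp_inv_self, S.tgt_eq_self_of_mem_units hx]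

theorem isSymmetric_iff {A : Set G} : S.IsSymmetric A ↔ ∀ g ∈ A, S.inv g ∈ A := by
  refine ⟨fun h g hg => h ▸ mem_image_of_mem _ hg, fun h => ?_⟩
  exact (image_subset_iff.2 h).antisymm fun g hg => ⟨S.inv g, h g hg, S.inv_inv g⟩

theorem isSymmetric_inter_preimage_inv (A : Set G) : S.IsSymmetric (A ∩ S.inv ⁻¹' A) :=
  S.isSymmetric_iff.2 fun g hg => ⟨hg.2, by rw [mem_preimage, S.inv_inv]; exact hg.1⟩

section Glue

variable {ι : Type*} {U V : Set G} {C Q : ι → Set G}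

def gluedSet (V : Set G) (C Q : ι → Set G) : Set G :=
  {g | S.src g ∈ V ∧ S.tgt g ∈ V ∧ ∀ i, S.src g ∈ C i ∨ S.tgt g ∈ C i → g ∈ Q i}

theorem gluedSet_subset (hcover : V ⊆ ⋃ i, C i) (hQU : ∀ i, Q i ⊆ U) :
    S.gluedSet V C Q ⊆ U := fun _ ⟨hs, _, hQ⟩ =>
  have ⟨i, hi⟩ := mem_iUnion.1 (hcover hs)
  hQU i (hQ i (.inl hi))

theorem setMul_gluedSet_subset (hcover : V ⊆ ⋃ i, C i)
    (hQU : ∀ i, S.setMul (Q i) (Q i) ⊆ U) : S.setMul (S.gluedSet V C Q) (S.gluedSet V C Q) ⊆ U := by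
  rintro _ ⟨g, ⟨hgs, -, hg⟩, h, ⟨-, -, hh⟩, hgh, rfl⟩
  obtain ⟨i, hi⟩ := mem_iUnion.1 (hcover hgs)
  exact hQU i ⟨g, hg i (.inl hi), h, hh i (.inr (hgh ▸ hi)), hgh, rfl⟩

theorem isSymmetric_gluedSet (hQ : ∀ i, S.IsSymmetric (Q i)) :
    S.IsSymmetric (S.gluedSet V C Q) := by
  refine S.isSymmetric_iff.2 fun g ⟨hs, ht, hg⟩ => ?_
  refine ⟨by rwa [S.src_inv], by rwa [S.tgt_inv], fun i hi => ?_⟩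
  rw [S.src_inv, S.tgt_inv, or_comm] at hi
  exact S.isSymmetric_iff.1 (hQ i) g (hg i hi)

theorem units_inter_gluedSet (hunits : ∀ i, ∀ x ∈ S.units, x ∈ C i → x ∈ Q i) :
    S.units ∩ S.gluedSet V C Q = S.units ∩ V := by
  refine Subset.antisymm (fun x ⟨hx, hxs, _⟩ => ⟨hx, hx ▸ hxs⟩) fun x ⟨hx, hxV⟩ => ⟨hx, ?_⟩
  have hxt := S.tgt_eq_self_of_mem_units hx
  have hxs : S.src x = x := hx
  refine ⟨by rwa [hxs], by rwa [hxt], fun i hi => hunits i x hx ?_⟩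
  rwa [hxs, hxt, or_self] at hi

theorem isUnital_gluedSet (hunits : ∀ i, ∀ x ∈ S.units, x ∈ C i → x ∈ Q i) :
    S.IsUnital (S.gluedSet V C Q) := by
  have hmem {x} (hx : x ∈ S.units) (hxV : x ∈ V) : x ∈ S.gluedSet V C Q :=
    ((S.units_inter_gluedSet hunits).ge ⟨hx, hxV⟩).2
  exact ⟨image_subset_iff.2 fun g hg => hmem (S.src_src g) hg.1,
    image_subset_iff.2 fun g hg => hmem (S.src_of_tgt g) hg.2.1⟩

end Glue

section Topological

variable [TopologicalSpace G] {S}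

theorem IsTopological.isClosed_units_subtype (hS : S.IsTopological) {V : Set G} [T2Space V]
    (hV : S.src '' V ⊆ V) : IsClosed {y : V | (y : G) ∈ S.units} := by
  convert isClosed_eq (hS.continuous_src.restrict (mapsTo_iff_image_subset.2 hV)) continuous_id
    using 1
  ext y
  simp [units, Subtype.ext_iff]

theorem IsTopological.exists_isOpen_isSymmetric_setMul_subset (hS : S.IsTopological)
    {U : Set G} (hU : IsOpen U) {x : G} (hx : x ∈ S.units) (hxU : x ∈ U) :
    ∃ P, IsOpen P ∧ x ∈ P ∧ P ⊆ U ∧ S.IsSymmetric P ∧ S.setMul P P ⊆ U := by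
  have hxx : S.Composable x x := hx.trans (S.tgt_eq_self_of_mem_units hx).symm
  have hcomp : ∀ᶠ p in 𝓝 (x, x), ∀ hp : S.Composable p.1 p.2, S.comp p.1 p.2 ∈ U := by
    have := hS.continuous_comp.continuousAt (x := ⟨(x, x), hxx⟩)
      (hU.mem_nhds ((S.comp_self_of_mem_units hx).symm ▸ hxU))
    rw [mem_map, nhds_subtype_eq_comap, mem_comap'] at this
    exact mem_of_superset this fun p hp hc => hp (x := ⟨p, hc⟩) rfl
  rw [nhds_prod_eq, eventually_prod_self_iff'] at hcomp
  obtain ⟨N, hN, hNU⟩ := hcomp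
  obtain ⟨P, hPN, hPo, hxP⟩ := mem_nhds_iff.1 (inter_mem hN (hU.mem_nhds hxU))
  refine ⟨P ∩ S.inv ⁻¹' P, hPo.inter (hPo.preimage hS.continuous_inv),
    ⟨hxP, by rwa [mem_preimage, S.inv_eq_self_of_mem_units hx]⟩, fun g hg => (hPN hg.1).2,
    S.isSymmetric_inter_preimage_inv P, ?_⟩
  rintro _ ⟨g, hg, h, hh, hgh, rfl⟩
  exact hNU g (hPN hg.1).1 h (hPN hh.1).1 hgh

theorem IsTopological.isOpen_gluedSet {ι : Type*} {V : Set G} {C Q : ι → Set G}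
    (hS : S.IsTopological) (hV : IsOpen V) (hQ : ∀ i, IsOpen (Q i))
    (hfin : ∀ y ∈ V, {i | y ∈ C i}.Finite)
    (hev : ∀ y ∈ V, ∀ᶠ z in 𝓝 y, {i | z ∈ C i} ⊆ {i | y ∈ C i}) :
    IsOpen (S.gluedSet V C Q) := by
  refine isOpen_iff_eventually.2 fun g₀ ⟨hs₀, ht₀, hg₀⟩ => ?_
  have hsrc := hS.continuous_src.continuousAt (x := g₀)
  have htgt := hS.continuous_tgt.continuousAt (x := g₀)
  have hnear : ∀ᶠ g in 𝓝 g₀, ∀ i ∈ {i | S.src g₀ ∈ C i} ∪ {i | S.tgt g₀ ∈ C i}, g ∈ Q i :=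
    ((hfin _ hs₀).union (hfin _ ht₀)).eventually_all.2 fun i hi => (hQ i).mem_nhds (hg₀ i hi)
  filter_upwards [hsrc (hV.mem_nhds hs₀), htgt (hV.mem_nhds ht₀), hsrc (hev _ hs₀),
    htgt (hev _ ht₀), hnear] with g hs ht hCs hCt hg
  exact ⟨hs, ht, fun i hi => hg i (hi.imp (@hCs i) (@hCt i))⟩

end Topological

end Groupoidal

/-- **Ramsay's lemma.**  In a topological groupoid, for any open `U` and any
unital open `V` which is Hausdorff and paracompact in the subspace topology
with `G⁰ ∩ V ⊆ U`, there is a symmetric unital open `W ⊆ U` with `W · W ⊆ U`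
and `G⁰ ∩ W = G⁰ ∩ V`. -/
theorem ramsay_halving {G : Type*} [TopologicalSpace G]
    (S : Groupoidal G) (hTop : S.IsTopological)
    (U V : Set G) (hUopen : IsOpen U) (hVopen : IsOpen V)
    (hVunital : S.IsUnital V)
    (hT2 : T2Space ↥V) (hPara : ParacompactSpace ↥V)
    (hVU : S.units ∩ V ⊆ U) :
    ∃ W : Set G, IsOpen W ∧ W ⊆ U ∧ S.IsSymmetric W ∧ S.IsUnital W ∧
      S.setMul W W ⊆ U ∧ S.units ∩ W = S.units ∩ V := by
  choose P hPo hxP hPU hPsymm hPmul using fun x : ↥(S.units ∩ V) =>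
    hTop.exists_isOpen_isSymmetric_setMul_subset hUopen x.2.1 (hVU x.2)
  let u : Option ↥(S.units ∩ V) → Set V := fun i =>
    i.elim {y | (y : G) ∉ S.units} fun x => (↑) ⁻¹' P x
  have hu : ∀ i, IsOpen (u i) := by
    rintro (_ | x)
    exacts [(hTop.isClosed_units_subtype hVunital.1).isOpen_compl,
      (hPo x).preimage continuous_subtype_val]
  have hucover : ⋃ i, u i = univ := by
    refine eq_univ_of_forall fun y => mem_iUnion.2 ?_
    by_cases hy : (y : G) ∈ S.units
    exacts [⟨some ⟨y, hy, y.2⟩, hxP _⟩, ⟨none, hy⟩]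
  obtain ⟨C, hCc, hCu, hCcover, hCf⟩ := exists_locallyFinite_isClosed_refinement hu hucover
  let Q : Option ↥(S.units ∩ V) → Set G := fun i => i.elim ∅ P
  have hVC : V ⊆ ⋃ i, ((↑) '' C i : Set G) := by
    rw [← image_iUnion, hCcover, image_univ, Subtype.range_coe]
  have hunits : ∀ i, ∀ x ∈ S.units, x ∈ ((↑) '' C i : Set G) → x ∈ Q i := by
    rintro (_ | p) x hx ⟨y, hy, rfl⟩
    exacts [absurd hx (hCu none hy), hCu (some p) hy]
  refine ⟨S.gluedSet V (fun i => (↑) '' C i) Q,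
    hTop.isOpen_gluedSet hVopen ?_ (fun y hy => hCf.finite_setOf_mem_image_val ⟨y, hy⟩)
      (fun y hy => hCf.eventually_subset_image_val hCc hVopen ⟨y, hy⟩),
    S.gluedSet_subset hVC ?_, S.isSymmetric_gluedSet ?_, S.isUnital_gluedSet hunits,
    S.setMul_gluedSet_subset hVC ?_, S.units_inter_gluedSet hunits⟩
  all_goals rintro (_ | x)
  exacts [isOpen_empty, hPo x, empty_subset U, hPU x, image_empty _, hPsymm x,
    fun _ ⟨_, hg, _⟩ => hg.elim, hPmul x]
end
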